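/- arXiv:1007.4383 — 8 statements merged into one kernel-verified Lean document; each statement's English description precedes it below -/
import Mathlib

section
/- Let G be a simple graph on vertex set [n], and let ≺ be any term order on S = K[x_1,...,x_n,y_1,...,y_n]. Define the directed graph G_≺ on vertex set [n] with an arc (i,j) whenever x_i y_j is the leading term of f_{ij} = x_i y_j - x_j y_i for an edge {i,j} of G. Then G_≺ is an acyclic directed graph. -/
/-! The relation `x_b y_a ≺ x_a y_b` is transitive, because a term order is cancellative and
`x_a y_b · x_b y_c = x_a y_c · x_b y_b`; it is also irreflexive, so every arc path of `G_≺`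
from `i` back to `i` would give `x_i y_i ≺ x_i y_i`. -/

open MvPolynomial

/-- The exponent vector of the monomial `x_i * y_j` in `K[x_1,…,x_n,y_1,…,y_n]`,
where the variable set is `Fin n ⊕ Fin n` (`inl` for `x`, `inr` for `y`). -/
noncomputable def xy {n : ℕ} (i j : Fin n) : (Fin n ⊕ Fin n) →₀ ℕ :=
  Finsupp.single (Sum.inl i) 1 + Finsupp.single (Sum.inr j) 1

/-- The generators `f_{ij} = x_i y_j - x_j y_i` of the binomial edge ideal of `G`. -/
def edgeGens (n : ℕ) (K : Type*) [Field K] (G : SimpleGraph (Fin n)) :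
    Set (MvPolynomial (Fin n ⊕ Fin n) K) :=
  {f | ∃ i j : Fin n, i < j ∧ G.Adj i j ∧
    f = X (Sum.inl i) * X (Sum.inr j) - X (Sum.inl j) * X (Sum.inr i)}

/-- The leading monomial (with coefficient `1`) of `f` with respect to the term order `m`. -/
noncomputable def ldMon {σ K : Type*} [Field K] (m : MonomialOrder σ)
    (f : MvPolynomial σ K) : MvPolynomial σ K :=
  monomial (m.toSyn.symm (f.support.sup fun d => m.toSyn d)) (1 : K)

/-- The generators `f_{ij}` of the binomial edge ideal `J_G` form a (quadratic) Gröbner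
basis with respect to the term order `m`: their leading monomials generate the initial
ideal of `J_G`. -/
def HasQuadGB {n : ℕ} (K : Type*) [Field K] (G : SimpleGraph (Fin n))
    (m : MonomialOrder (Fin n ⊕ Fin n)) : Prop :=
  Ideal.span (ldMon m '' edgeGens n K G) =
    Ideal.span (ldMon m '' {f | f ∈ Ideal.span (edgeGens n K G) ∧ f ≠ 0})

theorem xy_add_xy {n : ℕ} (a b c : Fin n) : xy a b + xy b c = xy a c + xy b b := by
  simp only [xy]
  abel

theorem MonomialOrder.xy_lt_xy_trans {n : ℕ} (m : MonomialOrder (Fin n ⊕ Fin n))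
    {a b c : Fin n} (hab : m.toSyn (xy b a) < m.toSyn (xy a b))
    (hbc : m.toSyn (xy c b) < m.toSyn (xy b c)) :
    m.toSyn (xy c a) < m.toSyn (xy a c) := by
  have hsum : m.toSyn (xy c b + xy b a) < m.toSyn (xy a b + xy b c) := by
    rw [map_add, map_add, add_comm (m.toSyn (xy c b))]
    exact add_lt_add hab hbc
  rw [xy_add_xy, xy_add_xy, map_add, map_add] at hsum
  exact lt_of_add_lt_add_right hsum

/-- For any graph `G` on `[n]` and any term order `≺` on
`S = K[x_1,…,x_n,y_1,…,y_n]`, the directed graph `G_≺` on `[n]`, with an arc `(i,j)`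
whenever `{i,j}` is an edge of `G` and `x_i y_j` is the leading term of
`f_{ij} = x_i y_j - x_j y_i`, is acyclic: no vertex lies on a directed cycle. -/
theorem stmt0 {n : ℕ} (G : SimpleGraph (Fin n)) (m : MonomialOrder (Fin n ⊕ Fin n))
    (i : Fin n) :
    ¬ Relation.TransGen
        (fun a b : Fin n => G.Adj a b ∧ m.toSyn (xy b a) < m.toSyn (xy a b)) i i := by
  intro hcycle
  have : IsTrans (Fin n) fun a b => m.toSyn (xy b a) < m.toSyn (xy a b) :=
    ⟨fun _ _ _ => m.xy_lt_xy_trans⟩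
  have hlt : m.toSyn (xy i i) < m.toSyn (xy i i) :=
    Relation.transGen_minimal (r' := fun a b => m.toSyn (xy b a) < m.toSyn (xy a b))
      (fun _ _ hab => hab.2) i i hcycle
  exact lt_irrefl _ hlt
end

section
/- Let G be a graph on [n]. Then J_G has a quadratic Gröbner basis with respect to some term order on S if and only if there is a labelling of the vertices of G with respect to which G is closed. -/
open MvPolynomial

/-- `G` is closed with respect to the (strict) ordering `lt` of its vertices:
for any two edges sharing the smaller endpoint the two larger endpoints are adjacent,
and for any two edges sharing the larger endpoint the two smaller endpoints are adjacent. -/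
def ClosedWrt {V : Type*} (G : SimpleGraph V) (lt : V → V → Prop) : Prop :=
  ∀ i j k : V, G.Adj i j → G.Adj i k → j ≠ k →
    ((lt i j → lt i k → G.Adj j k) ∧ (lt j i → lt k i → G.Adj j k))

/-!
For a monomial order `m`, write `a ≺ b` (`VertexLT m a b`) when `x_a y_b` is the leading
monomial of `f_{ab}`. This is a strict total order on the vertices, and every total order on the
vertices is `≺` for a suitable lexicographic order, so it suffices to show that the `f_{ij}` form
a Gröbner basis for `m` exactly when `G` is closed for `≺`.

If they do, take edges `{i, j}, {i, k}` with `j ≺ k`, and let `(v, v_j, v_k)` be `(x_i, x_j, x_k)`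
or `(y_i, y_j, y_k)`. Then `v f_{jk} = v_j f_{ik} - v_k f_{ij}` lies in `J_G`, so its leading
monomial `v x_j y_k` is divisible by some `x_p y_q` with `{p, q}` an edge and `p ≺ q`; in both
closedness situations this forces `{p, q} = {j, k}`.

Conversely, read `u x_i y_j ⟶ u x_j y_i` (for edges with `i ≺ j`) as a rewriting system on
monomials. It decreases `m`, and closedness makes it locally confluent, so joinability is a
congruence `∼` on monomials. `J_G` lies in the kernel of the induced ring map
`K[monomials] → K[monomials / ∼]`, and an element of that kernel whose leading monomial `d` is
irreducible must vanish: every other monomial of the class of `d` rewrites to `d`, hence is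
larger than `d` and does not occur in the support.
-/

open Relation
open scoped MonomialOrder

universe u v w

theorem Finsupp.mapDomain_apply_of_forall_eq_imp {α β M : Type*} [AddCommMonoid M] {f : α → β}
    {x : α →₀ M} {a : α} (h : ∀ b ∈ x.support, f b = f a → b = a) :
    mapDomain f x (f a) = x a := by
  classical
  rw [mapDomain, sum_apply, sum_eq_single a (fun b hb hba => ?_) (fun _ => ?_), single_eq_same]
  · exact single_eq_of_ne (fun hfa => hba (h b (mem_support_iff.mpr hb) hfa.symm))
  · rw [single_zero, zero_apply]

theorem Finsupp.exists_add_eq_add_of_disjoint {ι : Type*} {u₁ u₂ a b : ι →₀ ℕ}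
    (h : u₁ + a = u₂ + b) (hab : Disjoint a b) : ∃ w, u₁ = w + b ∧ u₂ = w + a := by
  refine ⟨u₁ - b, ?_, ?_⟩ <;> ext v <;>
  · have hv := DFunLike.congr_fun h v
    have hd : a v = 0 ∨ b v = 0 := by
      by_contra! hne
      exact Finset.disjoint_left.mp (Finsupp.disjoint_iff.mp hab)
        (Finsupp.mem_support_iff.mpr hne.1) (Finsupp.mem_support_iff.mpr hne.2)
    simp only [Finsupp.add_apply, Finsupp.tsub_apply] at hv ⊢
    omega

def AddCon.joinReflTransGen {M : Type*} [AddCommMonoid M] (r : M → M → Prop)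
    (hadd : ∀ u a b, r a b → r (u + a) (u + b))
    (hconf : ∀ a b c, r a b → r a c → ∃ d, ReflGen r b d ∧ ReflTransGen r c d) : AddCon M where
  r := Join (ReflTransGen r)
  iseqv := equivalence_join_reflTransGen hconf
  add' := by
    have shift (u : M) {a b : M} (h : ReflTransGen r a b) : ReflTransGen r (u + a) (u + b) :=
      ReflTransGen.lift (u + ·) (fun _ _ => hadd u _ _) _ _ h
    rintro a b c d ⟨x, hax, hbx⟩ ⟨y, hcy, hdy⟩
    refine ⟨x + y, (shift a hcy).trans ?_, (shift b hdy).trans ?_⟩ <;>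
      simpa only [add_comm _ y] using shift y ‹_›

theorem exists_equiv_fin_lt_iff {α : Type*} [Fintype α] {k : ℕ} (hk : Fintype.card α = k)
    (r : α → α → Prop) [IsStrictTotalOrder α r] : ∃ e : α ≃ Fin k, ∀ a b, e a < e b ↔ r a b := by
  classical
  let := linearOrderOfSTO r
  exact ⟨(Fintype.orderIsoFinOfCardEq α hk).symm.toEquiv,
    fun _ _ => (Fintype.orderIsoFinOfCardEq α hk).symm.lt_iff_lt⟩

namespace MonomialOrder

/-- `MonomialOrder σ` is universe polymorphic in its `syn` type, while `MonomialOrder.lex` has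
its `syn` type in the universe of `σ`. -/
noncomputable def ulift {σ : Type u} (m : MonomialOrder.{u, v} σ) :
    MonomialOrder.{u, max v w} σ where
  syn := ULift.{w} m.syn
  isOrderedAddMonoid_syn :=
    Function.Injective.isOrderedAddMonoid ULift.down (fun _ _ => rfl) Iff.rfl
  toSyn := m.toSyn.trans AddEquiv.ulift.symm
  toSyn_monotone _ _ h := m.toSyn_monotone h

theorem lex_single_add_single_lt {σ : Type*} [LinearOrder σ] [WellFoundedGT σ] {a b c d : σ}
    (hb : a < b) (hc : a < c) (hd : a < d) :
    Finsupp.single b 1 + Finsupp.single c 1 ≺[lex] Finsupp.single a 1 + Finsupp.single d 1 := by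
  rw [lex_lt_iff, Finsupp.Lex.lt_iff]
  refine ⟨a, fun j hj => ?_, ?_⟩
  · simp [hj.ne, (hj.trans hb).ne, (hj.trans hc).ne, (hj.trans hd).ne]
  · simp [hb.ne, hc.ne, hd.ne]

variable {σ : Type*} (m : MonomialOrder σ)

theorem toSyn_le_of_reflTransGen {r : (σ →₀ ℕ) → (σ →₀ ℕ) → Prop}
    (hdec : ∀ d e, r d e → e ≺[m] d) {a b : σ →₀ ℕ} (h : ReflTransGen r a b) : b ≼[m] a := by
  induction h with
  | refl => exact le_rfl
  | tail _ hbc ih => exact (hdec _ _ hbc).le.trans ih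

theorem degree_monomial_sub_monomial {R : Type*} [CommRing R] [Nontrivial R] {a b : σ →₀ ℕ}
    (h : b ≺[m] a) : m.degree (monomial a (1 : R) - monomial b 1) = a := by
  classical
  have hdeg (c : σ →₀ ℕ) : m.degree (monomial c (1 : R)) = c := by
    rw [degree_monomial, if_neg one_ne_zero]
  rw [degree_sub_of_lt (by rwa [hdeg, hdeg]), hdeg]

theorem exists_rewrite_degree_of_mem_span {R : Type*} [CommRing R]
    {r : (σ →₀ ℕ) → (σ →₀ ℕ) → Prop} (hadd : ∀ u d e, r d e → r (u + d) (u + e))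
    (hconf : ∀ d e₁ e₂, r d e₁ → r d e₂ → ∃ c, ReflGen r e₁ c ∧ ReflTransGen r e₂ c)
    (hdec : ∀ d e, r d e → e ≺[m] d) {f : MvPolynomial σ R}
    (hf : f ∈ Ideal.span {g | ∃ d e, r d e ∧ g = monomial d 1 - monomial e 1}) (hf0 : f ≠ 0) :
    ∃ e, r (m.degree f) e := by
  by_contra! hirr
  let c := AddCon.joinReflTransGen r hadd hconf
  let Φ : MvPolynomial σ R →+* AddMonoidAlgebra R c.Quotient :=
    AddMonoidAlgebra.mapDomainRingHom R c.mk'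
  have hΦ : Φ f = 0 := by
    refine (Ideal.span_le (I := RingHom.ker Φ)).mpr ?_ hf
    rintro _ ⟨d, e, hde, rfl⟩
    have hce : (d : c.Quotient) = e := c.eq.mpr ⟨e, .single hde, .refl⟩
    rw [SetLike.mem_coe, RingHom.mem_ker, map_sub, ← single_eq_monomial, ← single_eq_monomial]
    simp [Φ, hce]
  have hfiber : ∀ a ∈ f.support, c.mk' a = c.mk' (m.degree f) → a = m.degree f := by
    intro a ha hca
    obtain ⟨x, hax, hdx⟩ := c.eq.mp hca
    obtain rfl : m.degree f = x := by
      rcases hdx.cases_head with h | ⟨e, he, -⟩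
      exacts [h, absurd he (hirr e)]
    exact m.toSyn.injective (le_antisymm (m.le_degree ha) (m.toSyn_le_of_reflTransGen hdec hax))
  have hcoeff := congrArg (fun g => AddMonoidAlgebra.coeff g (c.mk' (m.degree f))) hΦ
  simp only [Φ, AddMonoidAlgebra.mapDomainRingHom_apply, AddMonoidAlgebra.coeff_mapDomain]
    at hcoeff
  rw [Finsupp.mapDomain_apply_of_forall_eq_imp hfiber] at hcoeff
  exact hf0 (m.coeff_degree_eq_zero_iff.mp hcoeff)

end MonomialOrder

variable {n : ℕ}

theorem xy_apply_inl (i j a : Fin n) : xy i j (Sum.inl a) = if i = a then 1 else 0 := by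
  simp [xy, Finsupp.single_apply]

theorem xy_apply_inr (i j a : Fin n) : xy i j (Sum.inr a) = if j = a then 1 else 0 := by
  simp [xy, Finsupp.single_apply]

theorem xy_eq_xy_swap_iff {i j : Fin n} : xy i j = xy j i ↔ i = j := by
  refine ⟨fun h => ?_, fun h => h ▸ rfl⟩
  have hi := DFunLike.congr_fun h (Sum.inl i)
  simp only [xy_apply_inl] at hi
  by_contra hij
  rw [if_neg (Ne.symm hij)] at hi
  exact one_ne_zero hi

theorem xy_add_xy_add_xy (a b c : Fin n) :
    xy a b + xy b c + xy c a = xy b a + xy c b + xy a c := by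
  simp only [xy]; abel

theorem xy_le_single_add_xy {p q j k : Fin n} {v : Fin n ⊕ Fin n}
    (h : xy p q ≤ Finsupp.single v 1 + xy j k) :
    (p = j ∧ q = k) ∨ (v = Sum.inl p ∧ q = k) ∨ (p = j ∧ v = Sum.inr q) := by
  have hp := h (Sum.inl p)
  have hq := h (Sum.inr q)
  simp only [Finsupp.add_apply, xy_apply_inl, xy_apply_inr, Finsupp.single_apply] at hp hq
  split_ifs at hp hq <;> simp_all [eq_comm]

theorem disjoint_xy {i j k l : Fin n} (hik : i ≠ k) (hjl : j ≠ l) : Disjoint (xy i j) (xy k l) := by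
  rw [Finsupp.disjoint_iff, Finset.disjoint_left]
  rintro (v | v) h₁ h₂ <;>
    simp only [Finsupp.mem_support_iff, xy_apply_inl, xy_apply_inr, ne_eq, ite_eq_right_iff,
      one_ne_zero, imp_false, not_not] at h₁ h₂
  exacts [hik (h₁.trans h₂.symm), hjl (h₁.trans h₂.symm)]

def VertexLT (m : MonomialOrder (Fin n ⊕ Fin n)) (a b : Fin n) : Prop :=
  xy b a ≺[m] xy a b

instance (m : MonomialOrder (Fin n ⊕ Fin n)) : IsStrictTotalOrder (Fin n) (VertexLT m) where
  irrefl _ := lt_irrefl _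
  trans a b c hab hbc := by
    by_contra! hac
    have hcycle := congrArg m.toSyn (xy_add_xy_add_xy a b c)
    simp only [map_add] at hcycle
    exact (add_lt_add_of_lt_of_le (add_lt_add hab hbc) (not_lt.mp hac)).ne' hcycle
  trichotomous a b hab hba :=
    xy_eq_xy_swap_iff.mp (m.toSyn.injective (le_antisymm (not_lt.mp hab :) (not_lt.mp hba :)))

theorem exists_monomialOrder_vertexLT_iff (τ : Equiv.Perm (Fin n)) :
    ∃ m : MonomialOrder.{0, u} (Fin n ⊕ Fin n), ∀ a b, VertexLT m a b ↔ τ a < τ b := by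
  let lo : LinearOrder (Fin n ⊕ Fin n) := LinearOrder.lift' (fun v => toLex (Sum.map τ τ v))
    (toLex.injective.comp (τ.injective.sumMap τ.injective))
  -- `Fin n ⊕ Fin n` also carries the global (non-total) `Sum` preorder.
  have : @WellFoundedGT _ lo.toLT := @Finite.to_wellFoundedGT _ _ lo.toPreorder
  let m : MonomialOrder (Fin n ⊕ Fin n) := MonomialOrder.lex.ulift
  have hlt {a b : Fin n} (h : τ a < τ b) : VertexLT m a b :=
    MonomialOrder.lex_single_add_single_lt (Sum.Lex.inl_lt_inl_iff.mpr h) (Sum.Lex.inl_lt_inr _ _)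
      (Sum.Lex.inl_lt_inr _ _)
  refine ⟨m, fun a b => ⟨fun h => ?_, hlt⟩⟩
  rcases lt_trichotomy (τ a) (τ b) with hab | hab | hab
  · exact hab
  · exact absurd (τ.injective hab ▸ h) (irrefl b)
  · exact absurd (hlt hab) (asymm h)

noncomputable def edgeBinomial (R : Type*) [CommRing R] (i j : Fin n) :
    MvPolynomial (Fin n ⊕ Fin n) R :=
  X (Sum.inl i) * X (Sum.inr j) - X (Sum.inl j) * X (Sum.inr i)

section EdgeBinomial

variable {R : Type*} [CommRing R]

theorem edgeBinomial_swap (i j : Fin n) : edgeBinomial R j i = -edgeBinomial R i j := by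
  simp only [edgeBinomial]; ring

theorem edgeBinomial_eq_monomial_sub (i j : Fin n) :
    edgeBinomial R i j = monomial (xy i j) 1 - monomial (xy j i) 1 := by
  simp only [edgeBinomial, xy, X, monomial_mul, one_mul]

theorem edgeBinomial_ne_zero [Nontrivial R] {i j : Fin n} (h : i ≠ j) :
    edgeBinomial R i j ≠ 0 := by
  rw [edgeBinomial_eq_monomial_sub, sub_ne_zero]
  exact (monomial_left_injective one_ne_zero).ne (xy_eq_xy_swap_iff.not.mpr h)

/-- Laplace expansion of the vanishing determinant of the `3 × 3` matrix whose rows are the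
`e`-row, the `x`-row and the `y`-row on the columns `i, j, k`. -/
theorem X_mul_edgeBinomial {e : Fin n → Fin n ⊕ Fin n} (he : e = Sum.inl ∨ e = Sum.inr)
    (i j k : Fin n) :
    X (e i) * edgeBinomial R j k = X (e j) * edgeBinomial R i k - X (e k) * edgeBinomial R i j := by
  rcases he with rfl | rfl <;> simp only [edgeBinomial] <;> ring

theorem degree_edgeBinomial [Nontrivial R] {m : MonomialOrder (Fin n ⊕ Fin n)} {i j : Fin n}
    (h : VertexLT m i j) : m.degree (edgeBinomial R i j) = xy i j := by
  rw [edgeBinomial_eq_monomial_sub, m.degree_monomial_sub_monomial h]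

end EdgeBinomial

def EdgeStep (G : SimpleGraph (Fin n)) (r : Fin n → Fin n → Prop)
    (d e : Fin n ⊕ Fin n →₀ ℕ) : Prop :=
  ∃ i j u, G.Adj i j ∧ r i j ∧ d = u + xy i j ∧ e = u + xy j i

section EdgeStep

variable {G : SimpleGraph (Fin n)} {r : Fin n → Fin n → Prop}

theorem EdgeStep.add_left {d e : Fin n ⊕ Fin n →₀ ℕ} (h : EdgeStep G r d e)
    (u : Fin n ⊕ Fin n →₀ ℕ) : EdgeStep G r (u + d) (u + e) := by
  obtain ⟨i, j, w, hij, rij, rfl, rfl⟩ := h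
  exact ⟨i, j, u + w, hij, rij, (add_assoc _ _ _).symm, (add_assoc _ _ _).symm⟩

variable [Std.Trichotomous r]

theorem edgeStep_join_of_adj {p q : Fin n} (h : G.Adj p q) (w : Fin n ⊕ Fin n →₀ ℕ) :
    ∃ c, ReflGen (EdgeStep G r) (w + xy p q) c ∧ ReflTransGen (EdgeStep G r) (w + xy q p) c := by
  rcases trichotomous_of r p q with hpq | rfl | hqp
  · exact ⟨_, .single ⟨p, q, w, h, hpq, rfl, rfl⟩, .refl⟩
  · exact absurd h G.irrefl
  · exact ⟨_, .refl, .single ⟨q, p, w, h.symm, hqp, rfl, rfl⟩⟩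

theorem edgeStep_confluent (hG : ClosedWrt G r) {d e₁ e₂ : Fin n ⊕ Fin n →₀ ℕ}
    (h₁ : EdgeStep G r d e₁) (h₂ : EdgeStep G r d e₂) :
    ∃ c, ReflGen (EdgeStep G r) e₁ c ∧ ReflTransGen (EdgeStep G r) e₂ c := by
  obtain ⟨i, j, u₁, hij, rij, rfl, rfl⟩ := h₁
  obtain ⟨k, l, u₂, hkl, rkl, hd, rfl⟩ := h₂
  have hsingle {a b : Fin n ⊕ Fin n} (hab : a ≠ b) :
      Disjoint (Finsupp.single a 1) (Finsupp.single b (1 : ℕ)) :=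
    Finsupp.disjoint_iff.mpr ((Finsupp.support_single_disjoint one_ne_zero one_ne_zero).mpr hab)
  by_cases hik : i = k <;> by_cases hjl : j = l
  · subst hik hjl
    obtain rfl := add_right_cancel hd
    exact ⟨_, .refl, .refl⟩
  · subst hik
    obtain ⟨w, rfl, rfl⟩ := Finsupp.exists_add_eq_add_of_disjoint
      (add_right_cancel (b := Finsupp.single (Sum.inl i) 1)
        (by simpa only [xy, add_assoc, add_comm, add_left_comm] using hd))
      (hsingle (Sum.inr_injective.ne hjl))
    have e₁ : w + Finsupp.single (Sum.inr l) 1 + xy j i =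
        w + Finsupp.single (Sum.inr i) 1 + xy j l := by
      simp only [xy]; abel
    have e₂ : w + Finsupp.single (Sum.inr j) 1 + xy l i =
        w + Finsupp.single (Sum.inr i) 1 + xy l j := by
      simp only [xy]; abel
    rw [e₁, e₂]
    exact edgeStep_join_of_adj ((hG i j l hij hkl hjl).1 rij rkl) _
  · subst hjl
    obtain ⟨w, rfl, rfl⟩ := Finsupp.exists_add_eq_add_of_disjoint
      (add_right_cancel (b := Finsupp.single (Sum.inr j) 1)
        (by simpa only [xy, add_assoc, add_comm, add_left_comm] using hd))
      (hsingle (Sum.inl_injective.ne hik))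
    have e₁ : w + Finsupp.single (Sum.inl k) 1 + xy j i =
        w + Finsupp.single (Sum.inl j) 1 + xy k i := by
      simp only [xy]; abel
    have e₂ : w + Finsupp.single (Sum.inl i) 1 + xy j k =
        w + Finsupp.single (Sum.inl j) 1 + xy i k := by
      simp only [xy]; abel
    rw [e₁, e₂]
    exact edgeStep_join_of_adj ((hG j i k hij.symm hkl.symm hik).2 rij rkl).symm _
  · obtain ⟨w, rfl, rfl⟩ := Finsupp.exists_add_eq_add_of_disjoint hd (disjoint_xy hik hjl)
    refine ⟨w + xy j i + xy l k, .single ⟨k, l, w + xy j i, hkl, rkl, ?_, rfl⟩,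
      .single ⟨i, j, w + xy l k, hij, rij, ?_, ?_⟩⟩ <;> abel

end EdgeStep

section BinomialEdgeIdeal

variable {K : Type*} [Field K] {G : SimpleGraph (Fin n)} {m : MonomialOrder (Fin n ⊕ Fin n)}

theorem edgeBinomial_mem_edgeGens {i j : Fin n} (hij : i < j) (h : G.Adj i j) :
    edgeBinomial K i j ∈ edgeGens n K G :=
  ⟨i, j, hij, h, rfl⟩

theorem edgeBinomial_mem_span {i j : Fin n} (h : G.Adj i j) :
    edgeBinomial K i j ∈ Ideal.span (edgeGens n K G) := by
  rcases lt_or_gt_of_ne h.ne with hij | hji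
  · exact Ideal.subset_span (edgeBinomial_mem_edgeGens hij h)
  · rw [← neg_neg (edgeBinomial K i j), ← edgeBinomial_swap]
    exact neg_mem (Ideal.subset_span (edgeBinomial_mem_edgeGens hji h.symm))

theorem ldMon_eq_monomial_degree (f : MvPolynomial (Fin n ⊕ Fin n) K) :
    ldMon m f = monomial (m.degree f) 1 :=
  rfl

theorem ldMon_edgeBinomial {i j : Fin n} (h : VertexLT m i j) :
    ldMon m (edgeBinomial K i j) = monomial (xy i j) 1 := by
  rw [ldMon_eq_monomial_degree, degree_edgeBinomial h]

theorem ldMon_edgeBinomial_swap (i j : Fin n) :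
    ldMon m (edgeBinomial K j i) = ldMon m (edgeBinomial K i j) := by
  rw [ldMon_eq_monomial_degree, ldMon_eq_monomial_degree, edgeBinomial_swap, m.degree_neg]

theorem ldMon_image_edgeGens :
    ldMon m '' edgeGens n K G =
      (fun s => monomial s 1) '' {s | ∃ p q, G.Adj p q ∧ VertexLT m p q ∧ s = xy p q} := by
  ext f
  constructor
  · rintro ⟨_, ⟨i, j, hij, h, rfl⟩, rfl⟩
    rcases trichotomous_of (VertexLT m) i j with hlt | rfl | hlt
    · exact ⟨xy i j, ⟨i, j, h, hlt, rfl⟩, (ldMon_edgeBinomial hlt).symm⟩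
    · exact absurd hij (lt_irrefl i)
    · exact ⟨xy j i, ⟨j, i, h.symm, hlt, rfl⟩, by
        dsimp only; rw [← ldMon_edgeBinomial hlt, ldMon_edgeBinomial_swap]; rfl⟩
  · rintro ⟨_, ⟨p, q, h, hpq, rfl⟩, rfl⟩
    dsimp only
    rw [← ldMon_edgeBinomial hpq]
    rcases lt_or_gt_of_ne h.ne with hlt | hlt
    · exact ⟨_, edgeBinomial_mem_edgeGens hlt h, rfl⟩
    · exact ⟨_, edgeBinomial_mem_edgeGens hlt h.symm, ldMon_edgeBinomial_swap p q⟩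

theorem hasQuadGB_iff : HasQuadGB K G m ↔ ∀ f ∈ Ideal.span (edgeGens n K G), f ≠ 0 →
    ∃ p q, G.Adj p q ∧ VertexLT m p q ∧ xy p q ≤ m.degree f := by
  classical
  have hle : Ideal.span (ldMon m '' edgeGens n K G) ≤
      Ideal.span (ldMon m '' {f | f ∈ Ideal.span (edgeGens n K G) ∧ f ≠ 0}) := by
    refine Ideal.span_mono (Set.image_mono fun f hf => ⟨Ideal.subset_span hf, ?_⟩)
    obtain ⟨i, j, hij, -, rfl⟩ := hf
    exact edgeBinomial_ne_zero hij.ne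
  rw [HasQuadGB, hle.ge_iff_eq.symm, Ideal.span_le, Set.image_subset_iff]
  simp only [Set.subset_def, Set.mem_ofPred_eq, and_imp]
  refine forall₃_congr fun f _ _ => ?_
  rw [Set.mem_preimage, SetLike.mem_coe, ldMon_image_edgeGens, ldMon_eq_monomial_degree,
    mem_ideal_span_monomial_image, support_monomial, if_neg one_ne_zero]
  simp only [Finset.mem_singleton, Set.mem_ofPred_eq, ↓existsAndEq, and_true, and_assoc,
    forall_eq]

theorem exists_edge_le_of_hasQuadGB (hQ : HasQuadGB K G m) {i j k : Fin n} (hij : G.Adj i j)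
    (hik : G.Adj i k) {e : Fin n → Fin n ⊕ Fin n} (he : e = Sum.inl ∨ e = Sum.inr)
    (hjk : VertexLT m j k) :
    ∃ p q, G.Adj p q ∧ VertexLT m p q ∧ xy p q ≤ Finsupp.single (e i) 1 + xy j k := by
  have hmem : X (e i) * edgeBinomial K j k ∈ Ideal.span (edgeGens n K G) := by
    rw [X_mul_edgeBinomial he]
    exact sub_mem (Ideal.mul_mem_left _ _ (edgeBinomial_mem_span hik))
      (Ideal.mul_mem_left _ _ (edgeBinomial_mem_span hij))
  have hne : edgeBinomial K j k ≠ 0 := edgeBinomial_ne_zero (ne_of_irrefl hjk)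
  have := hasQuadGB_iff.mp hQ _ hmem (mul_ne_zero (X_ne_zero _) hne)
  rwa [m.degree_mul (X_ne_zero _) hne, m.degree_X, degree_edgeBinomial hjk] at this

theorem closedWrt_vertexLT_of_hasQuadGB (hQ : HasQuadGB K G m) : ClosedWrt G (VertexLT m) := by
  intro i j k hij hik hjk
  wlog hlt : VertexLT m j k generalizing j k
  · have hkj : VertexLT m k j :=
      ((trichotomous_of (VertexLT m) j k).resolve_left hlt).resolve_left hjk
    obtain ⟨h₁, h₂⟩ := this k j hik hij hjk.symm hkj
    exact ⟨fun h h' => (h₁ h' h).symm, fun h h' => (h₂ h' h).symm⟩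
  refine ⟨fun hij' _ => ?_, fun _ hki' => ?_⟩
  · obtain ⟨p, q, hpq, hpq', hle⟩ := exists_edge_le_of_hasQuadGB hQ hij hik (.inr rfl) hlt
    rcases xy_le_single_add_xy hle with ⟨rfl, rfl⟩ | ⟨hv, -⟩ | ⟨rfl, hv⟩
    · exact hpq
    · exact absurd hv Sum.inr_ne_inl
    · cases Sum.inr_injective hv
      exact absurd hpq' (asymm hij')
  · obtain ⟨p, q, hpq, hpq', hle⟩ := exists_edge_le_of_hasQuadGB hQ hij hik (.inl rfl) hlt
    rcases xy_le_single_add_xy hle with ⟨rfl, rfl⟩ | ⟨hv, rfl⟩ | ⟨-, hv⟩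
    · exact hpq
    · cases Sum.inl_injective hv
      exact absurd hpq' (asymm hki')
    · exact absurd hv Sum.inl_ne_inr

theorem EdgeStep.toSyn_lt {d e : Fin n ⊕ Fin n →₀ ℕ} (h : EdgeStep G (VertexLT m) d e) :
    e ≺[m] d := by
  obtain ⟨i, j, u, -, hij, rfl, rfl⟩ := h
  rw [map_add, map_add]
  exact add_lt_add_right hij _

theorem span_edgeGens_le_span_edgeStep :
    Ideal.span (edgeGens n K G) ≤
      Ideal.span {g | ∃ d e, EdgeStep G (VertexLT m) d e ∧ g = monomial d 1 - monomial e 1} := by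
  have hmem {i j : Fin n} (hij : G.Adj i j) (h : VertexLT m i j) :
      edgeBinomial K i j ∈ Ideal.span
        {g | ∃ d e, EdgeStep G (VertexLT m) d e ∧ g = monomial d 1 - monomial e 1} :=
    Ideal.subset_span ⟨_, _, ⟨i, j, 0, hij, h, (zero_add _).symm, (zero_add _).symm⟩,
      edgeBinomial_eq_monomial_sub i j⟩
  refine Ideal.span_le.mpr ?_
  rintro _ ⟨i, j, -, hij, rfl⟩
  change edgeBinomial K i j ∈ _
  rcases trichotomous_of (VertexLT m) i j with h | rfl | h
  · exact hmem hij h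
  · exact absurd hij G.irrefl
  · rw [← neg_neg (edgeBinomial K i j), ← edgeBinomial_swap]
    exact neg_mem (hmem hij.symm h)

theorem hasQuadGB_of_closedWrt (hG : ClosedWrt G (VertexLT m)) : HasQuadGB K G m := by
  refine hasQuadGB_iff.mpr fun f hf hf0 => ?_
  obtain ⟨e, i, j, u, hij, hlt, hd, -⟩ := m.exists_rewrite_degree_of_mem_span
    (fun u _ _ h => h.add_left u) (fun _ _ _ => edgeStep_confluent hG)
    (fun _ _ => EdgeStep.toSyn_lt) (span_edgeGens_le_span_edgeStep hf) hf0
  exact ⟨i, j, hij, hlt, hd ▸ le_add_self⟩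

theorem hasQuadGB_iff_closedWrt : HasQuadGB K G m ↔ ClosedWrt G (VertexLT m) :=
  ⟨closedWrt_vertexLT_of_hasQuadGB, hasQuadGB_of_closedWrt⟩

end BinomialEdgeIdeal

/-- For a graph `G` on `[n]`, the binomial edge ideal `J_G` has a
quadratic Gröbner basis with respect to some term order on `S` if and only if there is
a labelling of the vertices of `G` with respect to which `G` is closed. -/
theorem stmt3 {n : ℕ} (K : Type*) [Field K] (G : SimpleGraph (Fin n)) :
    (∃ m : MonomialOrder (Fin n ⊕ Fin n), HasQuadGB K G m) ↔
      ∃ σ : Equiv.Perm (Fin n), ClosedWrt G (fun a b => σ a < σ b) := by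
  constructor
  · rintro ⟨m, hm⟩
    obtain ⟨σ, hσ⟩ := exists_equiv_fin_lt_iff (Fintype.card_fin n) (VertexLT m)
    have hord : (fun a b => σ a < σ b) = VertexLT m := by
      ext a b
      exact hσ a b
    exact ⟨σ, hord ▸ hasQuadGB_iff_closedWrt.mp hm⟩
  · rintro ⟨τ, hτ⟩
    obtain ⟨m, hm⟩ := exists_monomialOrder_vertexLT_iff τ
    have hord : VertexLT m = fun a b => τ a < τ b := by
      ext a b
      exact hm a b
    exact ⟨m, hasQuadGB_iff_closedWrt.mpr (hord ▸ hτ)⟩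
end

section
/- Every closed graph is claw-free, i.e., if G is closed with respect to some labelling then G contains no three distinct edges e_1, e_2, e_3 with e_1 ∩ e_2 ∩ e_3 ≠ ∅ forming an induced K_{1,3}. Equivalently, G contains no induced complete bipartite subgraph K_{1,3}. -/
/-! In a closed graph the neighbours of a vertex `a` lying on the same side of `a` form a clique.
Of the three leaves of a claw centred at `a`, two lie on the same side of `a`, so they are
adjacent. -/

namespace ClosedWrt

variable {V : Type*} {G : SimpleGraph V} {lt : V → V → Prop}

theorem adj_of_lt_iff_lt [Std.Trichotomous lt] (hG : ClosedWrt G lt) {a b c : V}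
    (hab : G.Adj a b) (hac : G.Adj a c) (hbc : b ≠ c) (hside : lt a b ↔ lt a c) :
    G.Adj b c := by
  by_cases hb : lt a b
  · exact (hG a b c hab hac hbc).1 hb (hside.1 hb)
  · have hc : ¬ lt a c := mt hside.2 hb
    have hba : lt b a := by_contra fun h => hab.ne (Std.Trichotomous.trichotomous a b hb h)
    have hca : lt c a := by_contra fun h => hac.ne (Std.Trichotomous.trichotomous a c hc h)
    exact (hG a b c hab hac hbc).2 hba hca

theorem not_exists_claw [Std.Trichotomous lt] (hG : ClosedWrt G lt) :
    ¬ ∃ a b c d : V, G.Adj a b ∧ G.Adj a c ∧ G.Adj a d ∧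
        b ≠ c ∧ b ≠ d ∧ c ≠ d ∧ ¬ G.Adj b c ∧ ¬ G.Adj b d ∧ ¬ G.Adj c d := by
  rintro ⟨a, b, c, d, hab, hac, had, hbc, hbd, hcd, nbc, nbd, ncd⟩
  have pigeonhole : (lt a b ↔ lt a c) ∨ (lt a b ↔ lt a d) ∨ (lt a c ↔ lt a d) := by tauto
  rcases pigeonhole with hside | hside | hside
  · exact nbc (hG.adj_of_lt_iff_lt hab hac hbc hside)
  · exact nbd (hG.adj_of_lt_iff_lt hab had hbd hside)
  · exact ncd (hG.adj_of_lt_iff_lt hac had hcd hside)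

end ClosedWrt

/-- Every closed graph is claw-free: if `G` is closed with respect to
some labelling of its vertices, then `G` has no induced `K_{1,3}`, i.e. no four vertices
`a, b, c, d` with `b, c, d` pairwise distinct and nonadjacent, all adjacent to `a`. -/
theorem stmt5 {V : Type*} (G : SimpleGraph V)
    (h : ∃ ℓ : V ↪ ℕ, ClosedWrt G (fun a b => ℓ a < ℓ b)) :
    ¬ ∃ a b c d : V, G.Adj a b ∧ G.Adj a c ∧ G.Adj a d ∧
        b ≠ c ∧ b ≠ d ∧ c ≠ d ∧ ¬ G.Adj b c ∧ ¬ G.Adj b d ∧ ¬ G.Adj c d := by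
  obtain ⟨ℓ, hG⟩ := h
  have : Std.Trichotomous (fun a b : V => ℓ a < ℓ b) := InvImage.trichotomous ℓ.injective
  exact hG.not_exists_claw
end

section
/- Let G be a connected closed graph on [n] whose clique complex has facets F_i = [m_i, M_i] (intervals of integers) with 1 = m_1 < m_2 < ... < m_r, M_1 < M_2 < ... < M_r = n, m_i < M_i, and m_{i+1} ≤ M_i for all i. Then Δ(G) is a linear quasi-tree: for the order F_1,...,F_r, each F_i is a leaf of the subcomplex ⟨F_i,...,F_r⟩ and F_{i+1} is the unique branch of F_i for i < r. -/
/-- `F b` is a branch of the facet `F i` in the subcomplex `⟨F lo, …, F (r-1)⟩`: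
`b ≠ i` and every other facet meets `F i` inside `F b ∩ F i`. -/
def BranchOf {V : Type*} [DecidableEq V] (F : ℕ → Finset V) (lo r i b : ℕ) : Prop :=
  lo ≤ b ∧ b < r ∧ b ≠ i ∧
    ∀ j, lo ≤ j → j < r → j ≠ i → j ≠ b → F j ∩ F i ⊆ F b ∩ F i

/-- The complex with facets `F 0, …, F (r-1)` is a linear quasi-tree for this order:
each `F i` is a leaf of the subcomplex `⟨F i, …, F (r-1)⟩` and `F (i+1)` is its only
branch there. -/
def LinearQuasiTree {V : Type*} [DecidableEq V] (F : ℕ → Finset V) (r : ℕ) : Prop :=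
  ∀ i, i + 1 < r →
    (BranchOf F i r i (i + 1) ∧ ∀ b, BranchOf F i r i b → b = i + 1)

/-- `s` is a facet of the clique complex `Δ(G)`, i.e. a maximal clique of `G`. -/
def IsFacet {V : Type*} (G : SimpleGraph V) (s : Finset V) : Prop :=
  G.IsClique (s : Set V) ∧ ∀ t : Finset V, G.IsClique (t : Set V) → s ⊆ t → s = t

/-- `F 0, …, F (r-1)` is an enumeration (without repetitions) of the facets of the
clique complex `Δ(G)`. -/
def FacetEnum {V : Type*} (G : SimpleGraph V) (F : ℕ → Finset V) (r : ℕ) : Prop :=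
  (∀ i, i < r → IsFacet G (F i)) ∧
  (∀ s : Finset V, IsFacet G s → ∃ i, i < r ∧ F i = s) ∧
  (∀ i j, i < r → j < r → F i = F j → i = j)

/-!
A point of `F i = [m i, M i]` that lies in a later facet `F j` is at least `m j ≥ m (i+1)` and
at most `M i ≤ M (i+1)`, so it lies in `F (i+1)`: this makes `F (i+1)` a branch of `F i`.
No other facet `F b` with `b > i+1` is a branch, because the left endpoint `m (i+1)` lies in
`F i ∩ F (i+1)` (the consecutive facets overlap) but to the left of `F b`.
-/

section IntervalFacets

variable {α : Type*} [LinearOrder α] [LocallyFiniteOrder α] {m M : ℕ → α} {r : ℕ}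

theorem branchOf_Icc_succ (hm : StrictMonoOn m (Set.Iio r))
    (hM : ∀ i, i + 1 < r → M i ≤ M (i + 1)) {i : ℕ} (hi : i + 1 < r) :
    BranchOf (fun i => Finset.Icc (m i) (M i)) i r i (i + 1) := by
  refine ⟨by omega, hi, by omega, fun j _ hj hji hjs x hx => ?_⟩
  have hmj : m (i + 1) ≤ m j := (hm hi hj (by omega)).le
  simp only [Finset.mem_inter, Finset.mem_Icc] at hx ⊢
  exact ⟨⟨hmj.trans hx.1.1, hx.2.2.trans (hM i hi)⟩, hx.2⟩

theorem eq_succ_of_branchOf_Icc (hm : StrictMonoOn m (Set.Iio r))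
    (hM : ∀ i, i + 1 < r → M i ≤ M (i + 1)) (hcons : ∀ i, i + 1 < r → m (i + 1) ≤ M i)
    {i b : ℕ} (hi : i + 1 < r) (hb : BranchOf (fun i => Finset.Icc (m i) (M i)) i r i b) :
    b = i + 1 := by
  obtain ⟨hib, hbr, hbi, hsub⟩ := hb
  by_contra hne
  have hleft : m (i + 1) ∈ Finset.Icc (m (i + 1)) (M (i + 1)) ∩ Finset.Icc (m i) (M i) := by
    simp only [Finset.mem_inter, Finset.mem_Icc]
    exact ⟨⟨le_rfl, (hcons i hi).trans (hM i hi)⟩,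
      (hm (by omega : i < r) hi (by omega)).le, hcons i hi⟩
  have hmb : m (i + 1) < m b := hm hi hbr (by omega)
  have hleft_b := hsub (i + 1) (by omega) hi (by omega) (Ne.symm hne) hleft
  simp only [Finset.mem_inter, Finset.mem_Icc] at hleft_b
  exact hmb.not_ge hleft_b.1.1

theorem linearQuasiTree_Icc (hm : StrictMonoOn m (Set.Iio r))
    (hM : ∀ i, i + 1 < r → M i ≤ M (i + 1)) (hcons : ∀ i, i + 1 < r → m (i + 1) ≤ M i) :
    LinearQuasiTree (fun i => Finset.Icc (m i) (M i)) r := fun _ hi =>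
  ⟨branchOf_Icc_succ hm hM hi, fun _ hb => eq_succ_of_branchOf_Icc hm hM hcons hi hb⟩

end IntervalFacets

theorem stmt6_general (r : ℕ)
    (m M : ℕ → ℕ)
    (hm : ∀ i, i + 1 < r → m i < m (i + 1))
    (hM : ∀ i, i + 1 < r → M i < M (i + 1))
    (hcons : ∀ i, i + 1 < r → m (i + 1) ≤ M i) :
    LinearQuasiTree (fun i => Finset.Icc (m i) (M i)) r :=
  linearQuasiTree_Icc (strictMonoOn_of_lt_add_one Set.ordConnected_Iio fun a _ _ ha => hm a ha)
    (fun i hi => (hM i hi).le) hcons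

/-- Let `G` be a connected closed graph on `[n]` whose clique complex
has facets the intervals `F i = [m i, M i]` with `1 = m 0 < m 1 < … < m (r-1)`,
`M 0 < … < M (r-1) = n`, `m i < M i` and `m (i+1) ≤ M i`. Then `Δ(G)` is a linear
quasi-tree for the order `F 0, …, F (r-1)`: each `F i` is a leaf of
`⟨F i, …, F (r-1)⟩` and `F (i+1)` is its only branch. -/
theorem stmt6 (n r : ℕ) (hr : 1 ≤ r) (G : SimpleGraph ℕ) (hconn : G.Connected)
    (m M : ℕ → ℕ)
    (hm0 : m 0 = 1) (hMr : M (r - 1) = n)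
    (hm : ∀ i, i + 1 < r → m i < m (i + 1))
    (hM : ∀ i, i + 1 < r → M i < M (i + 1))
    (hmM : ∀ i, i < r → m i < M i)
    (hcons : ∀ i, i + 1 < r → m (i + 1) ≤ M i)
    (hfac : FacetEnum G (fun i => Finset.Icc (m i) (M i)) r) :
    LinearQuasiTree (fun i => Finset.Icc (m i) (M i)) r :=
  stmt6_general r m M hm hM hcons
end

section
/- Let Δ = ⟨F_1,...,F_r⟩ be a linear quasi-tree with the given leaf order. Then for all 1 ≤ i < j ≤ r, F_i ∩ F_j = F_i ∩ F_{i+1} ∩ ... ∩ F_j. In particular F_k ∩ F_ℓ ⊇ F_i ∩ F_j for all i ≤ k ≤ ℓ ≤ j. -/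
/-! Since `F (i+1)` is a branch of the leaf `F i` in `⟨F i, …, F (r-1)⟩`, every later facet
meets `F i` inside `F (i+1)`. Iterating this step along `i, i+1, …, j` shows that a vertex
of `F i ∩ F j` lies in every facet in between. -/

namespace LinearQuasiTree

variable {V : Type*} [DecidableEq V] {F : ℕ → Finset V} {r : ℕ}

theorem inter_subset_succ (h : LinearQuasiTree F r) {i j : ℕ} (hij : i < j) (hjr : j < r) :
    F i ∩ F j ⊆ F (i + 1) := by
  rcases eq_or_ne j (i + 1) with rfl | hj
  · exact Finset.inter_subset_right
  obtain ⟨⟨-, -, -, hbranch⟩, -⟩ := h i (by omega)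
  rw [Finset.inter_comm]
  exact (hbranch j hij.le hjr hij.ne' hj).trans Finset.inter_subset_left

theorem mem_of_mem_of_mem (h : LinearQuasiTree F r) {v : V} {i j k : ℕ}
    (hvi : v ∈ F i) (hvj : v ∈ F j) (hik : i ≤ k) (hkj : k ≤ j) (hjr : j < r) : v ∈ F k := by
  induction k, hik using Nat.le_induction with
  | base => exact hvi
  | succ k _ ih =>
    exact h.inter_subset_succ (by omega) hjr (Finset.mem_inter.mpr ⟨ih (by omega), hvj⟩)

end LinearQuasiTree

/-- If `⟨F 0, …, F (r-1)⟩` is a linear quasi-tree with the given leaf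
order, then for all `i < j < r` one has `F i ∩ F j = F i ∩ F (i+1) ∩ … ∩ F j`;
in particular `F i ∩ F j ⊆ F k ∩ F l` for all `i ≤ k ≤ l ≤ j`. -/
theorem stmt7 {V : Type*} [DecidableEq V] (F : ℕ → Finset V) (r : ℕ)
    (hlqt : LinearQuasiTree F r) (i j : ℕ) (hij : i < j) (hjr : j < r) :
    (∀ v, v ∈ F i ∩ F j ↔ ∀ k, i ≤ k → k ≤ j → v ∈ F k) ∧
    (∀ k l, i ≤ k → k ≤ l → l ≤ j → F i ∩ F j ⊆ F k ∩ F l) := by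
  have between {v : V} (hv : v ∈ F i ∩ F j) {k : ℕ} (hik : i ≤ k) (hkj : k ≤ j) : v ∈ F k :=
    hlqt.mem_of_mem_of_mem (Finset.mem_inter.mp hv).1 (Finset.mem_inter.mp hv).2 hik hkj hjr
  refine ⟨fun v => ⟨fun hv k => between hv, fun hv => ?_⟩, ?_⟩
  · exact Finset.mem_inter.mpr ⟨hv i le_rfl hij.le, hv j hij.le le_rfl⟩
  · intro k l hik hkl hlj v hv
    exact Finset.mem_inter.mpr ⟨between hv hik (hkl.trans hlj), between hv (hik.trans hkl) hlj⟩
end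

section
/- Let Δ = ⟨F_1,...,F_r⟩ be a linear quasi-tree and set n_i = max{j ∈ [r] : F_i ∩ F_j ≠ ∅}. Then n_1 ≤ n_2 ≤ ... ≤ n_r, and every set F_{i,j} = F_i ∩ F_j appearing in the list B = {F_{1,1},...,F_{1,n_1}, F_{2,n_1},...,F_{2,n_2},...,F_{r,r}} is nonempty. -/
namespace LinearQuasiTree

variable {V : Type*} [DecidableEq V] {F : ℕ → Finset V} {r : ℕ}

/- A point of `F i ∩ F j` lying in `F k`, `k < j`, lies in `F j ∩ F k`, which the branch
`F (k + 1)` of the leaf `F k` of `⟨F k, …, F (r-1)⟩` contains. -/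
theorem inter_subset_of_le (hF : LinearQuasiTree F r) {i j k : ℕ} (hik : i ≤ k) (hkj : k ≤ j)
    (hj : j < r) : F i ∩ F j ⊆ F k := by
  induction k, hik using Nat.le_induction with
  | base => exact Finset.inter_subset_left
  | succ k hik ih =>
    intro x hx
    have hxk : x ∈ F k := ih (by omega) hx
    have hxj : x ∈ F j := (Finset.mem_inter.mp hx).2
    rcases eq_or_ne j (k + 1) with rfl | hjk
    · exact hxj
    · have hbranch := (hF k (by omega)).1.2.2.2 j (by omega) hj (by omega) hjk
      exact (Finset.mem_inter.mp (hbranch (Finset.mem_inter.mpr ⟨hxj, hxk⟩))).1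

theorem inter_nonempty_left_of_le (hF : LinearQuasiTree F r) {i j k : ℕ}
    (h : (F i ∩ F j).Nonempty) (hik : i ≤ k) (hkj : k ≤ j) (hj : j < r) :
    (F i ∩ F k).Nonempty :=
  h.mono (Finset.subset_inter Finset.inter_subset_left (hF.inter_subset_of_le hik hkj hj))

theorem inter_nonempty_right_of_le (hF : LinearQuasiTree F r) {i j k : ℕ}
    (h : (F i ∩ F j).Nonempty) (hik : i ≤ k) (hkj : k ≤ j) (hj : j < r) :
    (F k ∩ F j).Nonempty :=
  h.mono (Finset.subset_inter (hF.inter_subset_of_le hik hkj hj) Finset.inter_subset_right)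

end LinearQuasiTree

theorem stmt8_general {V : Type*} [DecidableEq V] (F : ℕ → Finset V) (r : ℕ)
    (hlqt : LinearQuasiTree F r) (hne : ∀ i, i < r → (F i).Nonempty)
    (nmax : ℕ → ℕ)
    (hnmax : ∀ i, i < r → IsGreatest {j | j < r ∧ (F i ∩ F j).Nonempty} (nmax i)) :
    (∀ i, i + 1 < r → nmax i ≤ nmax (i + 1)) ∧
    (∀ i j, i < r → i ≤ j → j ≤ nmax i → (i = 0 ∨ nmax (i - 1) ≤ j) →
      (F i ∩ F j).Nonempty) := by
  have self_le_nmax : ∀ i, i < r → i ≤ nmax i := fun i hi =>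
    (hnmax i hi).2 ⟨hi, by simpa using hne i hi⟩
  refine ⟨fun i hi => ?_, fun i j hi hij hjn _ => ?_⟩
  · rcases le_or_gt (nmax i) (i + 1) with hle | hlt
    · exact hle.trans (self_le_nmax (i + 1) hi)
    · obtain ⟨hnr, hmeet⟩ := (hnmax i (by omega)).1
      exact (hnmax (i + 1) hi).2
        ⟨hnr, hlqt.inter_nonempty_right_of_le hmeet (by omega) hlt.le hnr⟩
  · obtain ⟨hnr, hmeet⟩ := (hnmax i hi).1
    exact hlqt.inter_nonempty_left_of_le hmeet hij hjn hnr

/-- Let `⟨F 0, …, F (r-1)⟩` be a linear quasi-tree and let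
`nmax i = max {j ∈ [r] : F i ∩ F j ≠ ∅}`. Then `nmax 0 ≤ nmax 1 ≤ … ≤ nmax (r-1)`,
and every intersection `F i ∩ F j` occurring in the list
`B = {F_{0,0}, …, F_{0,nmax 0}, F_{1,nmax 0}, …, F_{1,nmax 1}, …, F_{r-1,r-1}}`
is nonempty. -/
theorem stmt8 {V : Type*} [DecidableEq V] (F : ℕ → Finset V) (r : ℕ) (hr : 1 ≤ r)
    (hlqt : LinearQuasiTree F r) (hne : ∀ i, i < r → (F i).Nonempty)
    (nmax : ℕ → ℕ)
    (hnmax : ∀ i, i < r → IsGreatest {j | j < r ∧ (F i ∩ F j).Nonempty} (nmax i)) :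
    (∀ i, i + 1 < r → nmax i ≤ nmax (i + 1)) ∧
    (∀ i j, i < r → i ≤ j → j ≤ nmax i → (i = 0 ∨ nmax (i - 1) ≤ j) →
      (F i ∩ F j).Nonempty) :=
  stmt8_general F r hlqt hne nmax hnmax
end

section
/- Let Δ(G) = ⟨F_1,...,F_r⟩ be a closed clique complex of a graph G, and for border elements F_{i,j} (those with F_{i-1,j+1} empty or undefined) set F'_{i,j} = F_{i,j} \ (F_{i-1,j} ∪ F_{i,j+1}). Then the family {F'_{i,j}} is a partition of V(G); moreover, for v ∈ F'_{i,j}, v belongs to a facet F_k if and only if i ≤ k ≤ j. -/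
/-- A closed linear quasi-tree: a linear quasi-tree satisfying the incomparability
condition (I) and the covering condition (C). -/
def ClosedLQT {V : Type*} [DecidableEq V] (F : ℕ → Finset V) (r : ℕ) : Prop :=
  LinearQuasiTree F r ∧
  -- (I) incomparability
  (∀ i j k l, i ≤ j → k ≤ l → i < k → j < l → j < r → l < r →
    (F i ∩ F j).Nonempty → (F k ∩ F l).Nonempty →
    ¬ F i ∩ F j ⊆ F k ∩ F l ∧ ¬ F k ∩ F l ⊆ F i ∩ F j) ∧
  -- (C) covering
  (∀ i d, 1 ≤ d → i + d + 1 < r → (F i ∩ F (i + d + 1)).Nonempty →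
    F (i + 1) ∩ F (i + d) = (F i ∩ F (i + d)) ∪ (F (i + 1) ∩ F (i + d + 1)))

/-- `F_{i,j} = F i ∩ F j` is a border element of the poset `P`, i.e. `F_{i-1,j+1}` is
empty or undefined (with the convention `F_{i,j} = ∅` if `i < 1` or `j > r`). -/
def Border {V : Type*} [DecidableEq V] (F : ℕ → Finset V) (r i j : ℕ) : Prop :=
  i ≤ j ∧ j < r ∧ (i = 0 ∨ j + 1 = r ∨ F (i - 1) ∩ F (j + 1) = ∅)

/-- `F'_{i,j} = F_{i,j} \ (F_{i-1,j} ∪ F_{i,j+1})`, with the convention that the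
out-of-range intersections are empty. -/
def Fblock {V : Type*} [DecidableEq V] (F : ℕ → Finset V) (r i j : ℕ) : Finset V :=
  (F i ∩ F j) \
    ((if i = 0 then ∅ else F (i - 1) ∩ F j) ∪ (if j + 1 < r then F i ∩ F (j + 1) else ∅))

/-!
In a linear quasi-tree the facets containing a fixed vertex `v` form an interval `F i, …, F j`
of the leaf order: if `v ∈ F b ∩ F c` with `b + 1 < c`, then `F (b + 1)`, being the branch of
`F b` in `⟨F b, …, F (r-1)⟩`, contains `F c ∩ F b`, hence `v`. The block `F'_{i,j}` is exactly the set
of vertices whose interval is `[i, j]`, so the blocks are pairwise disjoint and the membership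
criterion holds. Every vertex lies in a maximal clique, so its interval exists; it is a border
pair because, by the covering condition (C), a nonempty `F_{i-1,j+1}` would put `v` into
`F (i-1)` or `F (j+1)`.
-/

namespace LinearQuasiTree

variable {V : Type*} [DecidableEq V] {F : ℕ → Finset V} {r : ℕ}

theorem mem_of_le_of_le (h : LinearQuasiTree F r) {v : V} {i j k : ℕ} (hjr : j < r)
    (hvi : v ∈ F i) (hvj : v ∈ F j) (hik : i ≤ k) (hkj : k ≤ j) : v ∈ F k := by
  induction k, hik using Nat.le_induction with
  | base => exact hvi
  | succ k hik ih =>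
    have hvk : v ∈ F k := ih (by omega)
    obtain rfl | hjk := eq_or_ne j (k + 1)
    · exact hvj
    · have hbranch := (h k (by omega)).1.2.2.2 j (by omega) hjr (by omega) hjk
      exact (Finset.mem_inter.mp (hbranch (Finset.mem_inter.mpr ⟨hvj, hvk⟩))).1

theorem mem_Fblock_iff (h : LinearQuasiTree F r) {v : V} {i j : ℕ} (hij : i ≤ j)
    (hjr : j < r) : v ∈ Fblock F r i j ↔ ∀ k < r, (v ∈ F k ↔ i ≤ k ∧ k ≤ j) := by
  simp only [Fblock, Finset.mem_sdiff, Finset.mem_inter, Finset.mem_union]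
  constructor
  · rintro ⟨⟨hvi, hvj⟩, hnot⟩ k hkr
    refine ⟨fun hvk => ⟨?_, ?_⟩, fun ⟨hik, hkj⟩ => h.mem_of_le_of_le hjr hvi hvj hik hkj⟩
    · by_contra! hki
      have hv : v ∈ F (i - 1) := h.mem_of_le_of_le hjr hvk hvj (by omega) (by omega)
      exact hnot (Or.inl (by rw [if_neg (by omega)]; exact Finset.mem_inter.mpr ⟨hv, hvj⟩))
    · by_contra! hjk
      have hv : v ∈ F (j + 1) := h.mem_of_le_of_le hkr hvi hvk (by omega) (by omega)
      exact hnot (Or.inr (by rw [if_pos (by omega)]; exact Finset.mem_inter.mpr ⟨hvi, hv⟩))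
  · intro hspan
    have hvi := (hspan i (by omega)).2 ⟨le_rfl, hij⟩
    have hvj := (hspan j hjr).2 ⟨hij, le_rfl⟩
    refine ⟨⟨hvi, hvj⟩, ?_⟩
    rintro (hlow | hhigh)
    · split_ifs at hlow with hi0
      · simp at hlow
      · have := (hspan (i - 1) (by omega)).1 (Finset.mem_inter.mp hlow).1
        omega
    · split_ifs at hhigh with hjr'
      · have := (hspan (j + 1) hjr').1 (Finset.mem_inter.mp hhigh).2
        omega
      · simp at hhigh

theorem exists_forall_mem_iff (h : LinearQuasiTree F r) {v : V} {m : ℕ} (hmr : m < r)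
    (hvm : v ∈ F m) : ∃ i j, i ≤ j ∧ j < r ∧ ∀ k < r, (v ∈ F k ↔ i ≤ k ∧ k ≤ j) := by
  set S := (Finset.range r).filter (fun k => v ∈ F k)
  have hS : S.Nonempty := ⟨m, by simp [S, hmr, hvm]⟩
  have hiS := S.min'_mem hS
  have hjS := S.max'_mem hS
  simp only [S, Finset.mem_filter, Finset.mem_range] at hiS hjS
  refine ⟨S.min' hS, S.max' hS, S.min'_le _ (S.max'_mem hS), hjS.1, fun k hkr => ⟨?_, ?_⟩⟩
  · intro hvk
    have hkS : k ∈ S := by simp [S, hkr, hvk]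
    exact ⟨S.min'_le k hkS, S.le_max' k hkS⟩
  · rintro ⟨hik, hkj⟩
    exact h.mem_of_le_of_le hjS.1 hiS.2 hjS.2 hik hkj

theorem disjoint_Fblock (h : LinearQuasiTree F r) {i j k l : ℕ} (hij : i ≤ j) (hjr : j < r)
    (hkl : k ≤ l) (hlr : l < r) (hne : (i, j) ≠ (k, l)) :
    Disjoint (Fblock F r i j) (Fblock F r k l) := by
  rw [Finset.disjoint_left]
  intro v hv₁ hv₂
  rw [h.mem_Fblock_iff hij hjr] at hv₁
  rw [h.mem_Fblock_iff hkl hlr] at hv₂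
  have hsame : ∀ n < r, (i ≤ n ∧ n ≤ j ↔ k ≤ n ∧ n ≤ l) :=
    fun n hn => (hv₁ n hn).symm.trans (hv₂ n hn)
  have := hsame i (by omega)
  have := hsame j hjr
  have := hsame k (by omega)
  have := hsame l hlr
  exact hne (Prod.ext (by omega) (by omega))

end LinearQuasiTree

namespace ClosedLQT

variable {V : Type*} [DecidableEq V] {F : ℕ → Finset V} {r : ℕ}

theorem mem_or_mem_of_nonempty (hc : ClosedLQT F r) {v : V} {i j : ℕ} (hij : i < j)
    (hjr : j + 1 < r) (hne : (F i ∩ F (j + 1)).Nonempty) (hvi : v ∈ F (i + 1))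
    (hvj : v ∈ F j) : v ∈ F i ∨ v ∈ F (j + 1) := by
  obtain ⟨d, rfl⟩ : ∃ d, j = i + d := ⟨j - i, by omega⟩
  have hcover := hc.2.2 i d (by omega) hjr hne
  have hv : v ∈ F (i + 1) ∩ F (i + d) := Finset.mem_inter.mpr ⟨hvi, hvj⟩
  rw [hcover, Finset.mem_union, Finset.mem_inter, Finset.mem_inter] at hv
  exact hv.imp (·.1) (·.2)

theorem border_of_forall_mem_iff (hc : ClosedLQT F r) {v : V} {i j : ℕ} (hij : i ≤ j)
    (hjr : j < r) (hspan : ∀ k < r, (v ∈ F k ↔ i ≤ k ∧ k ≤ j)) : Border F r i j := by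
  refine ⟨hij, hjr, ?_⟩
  by_contra! hnot
  obtain ⟨hi0, hjr', hne⟩ := hnot
  have hout := hc.mem_or_mem_of_nonempty (i := i - 1) (j := j) (by omega) (by omega) hne
    ((hspan (i - 1 + 1) (by omega)).2 (by omega)) ((hspan j hjr).2 ⟨hij, le_rfl⟩)
  rcases hout with hlow | hhigh
  · have := (hspan _ (by omega)).1 hlow
    omega
  · have := (hspan _ (by omega)).1 hhigh
    omega

end ClosedLQT

theorem SimpleGraph.exists_isFacet_mem {V : Type*} [Fintype V] (G : SimpleGraph V) (v : V) :
    ∃ s : Finset V, IsFacet G s ∧ v ∈ s := by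
  classical
  set T := Finset.univ.filter (fun s : Finset V => G.IsClique (s : Set V) ∧ v ∈ s)
  have hvT : {v} ∈ T := by simp [T]
  obtain ⟨s, hsT, hmax⟩ := T.exists_max_image Finset.card ⟨_, hvT⟩
  simp only [T, Finset.mem_filter, Finset.mem_univ, true_and] at hsT hmax
  refine ⟨s, ⟨hsT.1, fun t ht hst => ?_⟩, hsT.2⟩
  exact Finset.eq_of_subset_of_card_le hst (hmax t ⟨ht, hst hsT.2⟩)

/-- Let `Δ(G) = ⟨F 0, …, F (r-1)⟩` be a closed clique complex of a
graph `G`, and for border elements `F_{i,j}` set `F'_{i,j} = F_{i,j} \ (F_{i-1,j} ∪ F_{i,j+1})`.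
Then the family `{F'_{i,j}}` over border pairs is a partition of `V(G)`; moreover, for
`v ∈ F'_{i,j}`, `v` belongs to a facet `F k` if and only if `i ≤ k ≤ j`. -/
theorem stmt11 {V : Type*} [Fintype V] [DecidableEq V] (G : SimpleGraph V)
    (F : ℕ → Finset V) (r : ℕ) (hfac : FacetEnum G F r) (hc : ClosedLQT F r) :
    (∀ v : V, ∃ i j, Border F r i j ∧ v ∈ Fblock F r i j) ∧
    (∀ i j k l, Border F r i j → Border F r k l → (i, j) ≠ (k, l) →
      Disjoint (Fblock F r i j) (Fblock F r k l)) ∧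
    (∀ i j, Border F r i j → ∀ v ∈ Fblock F r i j, ∀ k, k < r →
      (v ∈ F k ↔ i ≤ k ∧ k ≤ j)) := by
  have hlqt : LinearQuasiTree F r := hc.1
  refine ⟨fun v => ?_, ?_, ?_⟩
  · obtain ⟨s, hs, hvs⟩ := G.exists_isFacet_mem v
    obtain ⟨m, hmr, rfl⟩ := hfac.2.1 s hs
    obtain ⟨i, j, hij, hjr, hspan⟩ := hlqt.exists_forall_mem_iff hmr hvs
    exact ⟨i, j, hc.border_of_forall_mem_iff hij hjr hspan,
      (hlqt.mem_Fblock_iff hij hjr).2 hspan⟩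
  · rintro i j k l ⟨hij, hjr, -⟩ ⟨hkl, hlr, -⟩ hne
    exact hlqt.disjoint_Fblock hij hjr hkl hlr hne
  · rintro i j ⟨hij, hjr, -⟩ v hv
    exact (hlqt.mem_Fblock_iff hij hjr).1 hv
end

section
/- A graph G is closed (with respect to some labelling) if and only if each connected component of G is closed. -/
namespace ClosedWrt

variable {V : Type*} {G : SimpleGraph V} {lt : V → V → Prop}

theorem comap {W : Type*} {f : W → V} (hf : Function.Injective f) (h : ClosedWrt G lt) :
    ClosedWrt (G.comap f) (fun a b => lt (f a) (f b)) :=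
  fun i j k hij hik hjk => h (f i) (f j) (f k) hij hik (hf.ne hjk)

theorem of_induce_supp
    (h : ∀ c : G.ConnectedComponent, ClosedWrt (G.induce c.supp) (fun a b => lt a b)) :
    ClosedWrt G lt := by
  intro i j k hij hik hjk
  have hj : j ∈ (G.connectedComponentMk i).supp :=
    (SimpleGraph.ConnectedComponent.connectedComponentMk_eq_of_adj hij).symm
  have hk : k ∈ (G.connectedComponentMk i).supp :=
    (SimpleGraph.ConnectedComponent.connectedComponentMk_eq_of_adj hik).symm
  exact h _ ⟨i, rfl⟩ ⟨j, hj⟩ ⟨k, hk⟩ hij hik (fun h => hjk (congrArg Subtype.val h))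

end ClosedWrt

theorem exists_embedding_nat_lt_iff_of_fibers {V ι : Type*} [Countable ι] (p : V → ι)
    (L : ∀ i, {v // p v = i} ↪ ℕ) :
    ∃ ℓ : V ↪ ℕ, ∀ i (u w : {v // p v = i}), ℓ u < ℓ w ↔ L i u < L i w := by
  obtain ⟨F, hF⟩ := Countable.exists_injective_nat ι
  let ℓ : V → ℕ := fun v => Nat.pair (F (p v)) (L (p v) ⟨v, rfl⟩)
  have hℓ : ∀ i (u : {v // p v = i}), ℓ u = Nat.pair (F i) (L i u) := by
    rintro _ ⟨u, rfl⟩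
    rfl
  have hinj : Function.Injective ℓ := by
    intro u w huw
    have hp : p u = p w := hF (Nat.pair_eq_pair.mp huw).1
    rw [hℓ (p w) ⟨u, hp⟩, hℓ (p w) ⟨w, rfl⟩] at huw
    exact congrArg Subtype.val ((L (p w)).injective (Nat.pair_eq_pair.mp huw).2)
  refine ⟨⟨ℓ, hinj⟩, fun i u w => ?_⟩
  change ℓ u < ℓ w ↔ _
  rw [hℓ i u, hℓ i w]
  exact StrictMono.lt_iff_lt fun _ _ => Nat.pair_lt_pair_right (F i)

/-- A graph `G` is closed (with respect to some labelling) if and only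
if each connected component of `G` is closed. -/
theorem stmt14 {V : Type*} [Fintype V] (G : SimpleGraph V) :
    (∃ ℓ : V ↪ ℕ, ClosedWrt G (fun a b => ℓ a < ℓ b)) ↔
      ∀ c : G.ConnectedComponent, ∃ ℓ : c.supp ↪ ℕ,
        ClosedWrt (G.induce c.supp) (fun a b => ℓ a < ℓ b) := by
  constructor
  · rintro ⟨ℓ, hℓ⟩ c
    exact ⟨(Function.Embedding.subtype _).trans ℓ, hℓ.comap Subtype.val_injective⟩
  · intro h
    choose L hL using h
    obtain ⟨ℓ, hℓ⟩ := exists_embedding_nat_lt_iff_of_fibers G.connectedComponentMk L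
    refine ⟨ℓ, ClosedWrt.of_induce_supp fun c => ?_⟩
    have hlt : (fun a b : c.supp => ℓ a < ℓ b) = fun a b => L c a < L c b :=
      funext₂ fun a b => propext (hℓ c a b)
    exact hlt ▸ hL c
end
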